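/- arXiv:2405.06474 — 3 statements merged into one kernel-verified Lean document; each statement's English description precedes it below -/
import Mathlib

section
/- Let $(a_j)_{j=0}^{J+1}$ be defined as follows: given $A > 1$, $t \geq 4$, and points $V_j = V_0 + j\sqrt{t}$ partitioning an interval contained in $[t/4 - \sqrt{t}, t + A + \sqrt{t}]$, set $a_j = A(1 + (V_j - t)^2/t)$ if $V_j > t$, $a_j = A(1 + (V_{j+1}-t)^2/t)$ if $V_{j+1} \leq t$, and $a_j = A$ otherwise. Then $\sum_{j=0}^{J+1} a_j^{-1} \leq C/A$ for an absolute constant $C > 0$ independent of $t$, $A$, and $J$. -/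
open Real Finset

lemma F_bound (u : ℝ) : |4 * u / (1 + |u|)| ≤ 4 := by
  have h0 : (0:ℝ) < 1 + |u| := by positivity
  rw [abs_div, abs_of_pos h0, div_le_iff₀ h0, abs_mul]
  have := abs_nonneg u
  simp only [abs_of_nonneg (by norm_num : (0:ℝ) ≤ 4)]
  nlinarith

lemma F_key (u : ℝ) :
    (1 + u ^ 2)⁻¹ + (4 * (u - 1) / (1 + |u - 1|) + 5) ≤ 4 * u / (1 + |u|) + 5 := by
  have h1 : (0:ℝ) < 1 + u ^ 2 := by positivity
  have key : (1 + u ^ 2)⁻¹ ≤ 4 * u / (1 + |u|) - 4 * (u - 1) / (1 + |u - 1|) := by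
    rcases le_or_gt 1 u with h | h
    · rw [abs_of_nonneg (by linarith), abs_of_nonneg (by linarith)]
      have hu : (0:ℝ) < u := by linarith
      have h2 : (0:ℝ) < 1 + u := by linarith
      have h3 : 4 * u / (1 + u) - 4 * (u - 1) / (1 + (u - 1)) = 4 / (u * (1 + u)) := by
        have : (1:ℝ) + (u - 1) = u := by ring
        rw [this]
        field_simp
        ring
      rw [h3, inv_eq_one_div, div_le_div_iff₀ h1 (by positivity)]
      nlinarith
    · rcases le_or_gt 0 u with h' | h'
      · rw [abs_of_nonneg h', abs_of_nonpos (by linarith)]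
        have h2 : (0:ℝ) < 1 + u := by linarith
        have h3 : (1:ℝ) + -(u - 1) = 2 - u := by ring
        rw [h3]
        have h3' : (0:ℝ) < 2 - u := by linarith
        have h4 : 4 * u / (1 + u) - 4 * (u - 1) / (2 - u) =
            (4 * (1 + 2*u - 2*u^2)) / ((1 + u) * (2 - u)) := by
          field_simp
          ring
        rw [h4, inv_eq_one_div, div_le_div_iff₀ h1 (by positivity)]
        nlinarith [sq_nonneg u, sq_nonneg (u - 1), mul_nonneg h' (by linarith : (0:ℝ) ≤ 1 - u),
          mul_nonneg (mul_nonneg h' h') (by linarith : (0:ℝ) ≤ 1 - u)]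
      · rw [abs_of_neg h', abs_of_nonpos (by linarith)]
        have h2 : (1:ℝ) + -u = 1 - u := by ring
        have h3 : (1:ℝ) + -(u - 1) = 2 - u := by ring
        rw [h2, h3]
        have h2' : (0:ℝ) < 1 - u := by linarith
        have h3' : (0:ℝ) < 2 - u := by linarith
        have h4 : 4 * u / (1 - u) - 4 * (u - 1) / (2 - u) =
            4 / ((1 - u) * (2 - u)) := by
          field_simp
          ring
        rw [h4, inv_eq_one_div, div_le_div_iff₀ h1 (by positivity)]
        nlinarith [sq_nonneg u, sq_nonneg (u + 1)]
  linarith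

lemma sumB (n : ℕ) : ∀ u : ℝ, ∑ j ∈ Finset.range n, (1 + ((j : ℝ) - u) ^ 2)⁻¹
    ≤ 4 * u / (1 + |u|) + 5 := by
  induction n with
  | zero =>
    intro u
    simp only [Finset.range_zero, Finset.sum_empty]
    have := abs_le.1 (F_bound u)
    linarith [this.1]
  | succ n ih =>
    intro u
    rw [Finset.sum_range_succ']
    have hre : ∀ i ∈ Finset.range n,
        (1 + ((((i+1:ℕ)):ℝ) - u) ^ 2)⁻¹ = (1 + ((i:ℝ) - (u - 1)) ^ 2)⁻¹ := by
      intro i _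
      push_cast
      ring_nf
    rw [Finset.sum_congr rfl hre]
    have e0 : (1 + (((0:ℕ):ℝ) - u) ^ 2)⁻¹ = (1 + u ^ 2)⁻¹ := by
      congr 1
      push_cast
      ring
    rw [e0]
    linarith [ih (u - 1), F_key u]

lemma sumB9 (n : ℕ) (u : ℝ) : ∑ j ∈ Finset.range n, (1 + ((j : ℝ) - u) ^ 2)⁻¹ ≤ 9 := by
  have h1 := sumB n u
  have h2 := abs_le.1 (F_bound u)
  linarith [h2.2]

/-- Summability of inverse weights: there is an absolute constant `C > 0` such that for any
`A > 1`, `t ≥ 4`, and points `V j = V 0 + j√t` contained in `[t/4 - √t, t + A + √t]`, the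
weights `a j` (equal to `A(1+(V j - t)²/t)` if `V j > t`, `A(1+(V (j+1) - t)²/t)` if
`V (j+1) ≤ t`, and `A` otherwise) satisfy `∑_{j=0}^{J+1} (a j)⁻¹ ≤ C/A`. -/
theorem inverse_weights_summable :
    ∃ C : ℝ, 0 < C ∧
      ∀ (A t : ℝ) (J : ℕ) (V : ℕ → ℝ), 1 < A → 4 ≤ t →
      (∀ j : ℕ, V j = V 0 + j * Real.sqrt t) →
      (∀ j : ℕ, j ≤ J + 1 → t / 4 - Real.sqrt t ≤ V j ∧ V j ≤ t + A + Real.sqrt t) →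
      (∑ j ∈ Finset.range (J + 2),
          (if t < V j then A * (1 + (V j - t) ^ 2 / t)
            else if V (j + 1) ≤ t then A * (1 + (V (j + 1) - t) ^ 2 / t)
            else A)⁻¹)
        ≤ C / A := by
  refine ⟨18, by norm_num, ?_⟩
  intro A t J V hA ht hV _hrange
  have ht0 : (0:ℝ) < t := by linarith
  have hs : 0 < Real.sqrt t := Real.sqrt_pos.2 ht0
  set s := Real.sqrt t with hsdef
  have hss : s ^ 2 = t := Real.sq_sqrt ht0.le
  set u : ℝ := (t - V 0) / s with hudef
  have hA0 : (0:ℝ) < A := by linarith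
  have hVj : ∀ j : ℕ, V j - t = s * ((j : ℝ) - u) := by
    intro j
    rw [hV j, hudef]
    field_simp
    ring
  have hsq : ∀ j : ℕ, (V j - t) ^ 2 / t = ((j : ℝ) - u) ^ 2 := by
    intro j
    rw [hVj j, mul_pow, hss]
    field_simp
  have hterm : ∀ j : ℕ,
      (if t < V j then A * (1 + (V j - t) ^ 2 / t)
        else if V (j + 1) ≤ t then A * (1 + (V (j + 1) - t) ^ 2 / t)
        else A)⁻¹
      ≤ A⁻¹ * ((1 + ((j : ℝ) - u) ^ 2)⁻¹ + (1 + ((j : ℝ) - (u - 1)) ^ 2)⁻¹) := by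
    intro j
    have hx : (0:ℝ) < 1 + ((j : ℝ) - u) ^ 2 := by positivity
    have hy : (0:ℝ) < 1 + ((j : ℝ) - (u - 1)) ^ 2 := by positivity
    have hcast : (((j + 1 : ℕ)) : ℝ) - u = (j : ℝ) - (u - 1) := by push_cast; ring
    split_ifs with h1 h2
    · rw [hsq j, mul_inv]
      have : (0:ℝ) < A⁻¹ * (1 + ((j : ℝ) - (u - 1)) ^ 2)⁻¹ := by positivity
      nlinarith [inv_pos.2 hA0, inv_pos.2 hx]
    · rw [hsq (j + 1), hcast, mul_inv]
      have : (0:ℝ) < A⁻¹ * (1 + ((j : ℝ) - u) ^ 2)⁻¹ := by positivity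
      nlinarith [inv_pos.2 hA0, inv_pos.2 hy]
    · -- V j ≤ t < V (j+1) : both squares ≤ 1
      push_neg at h1 h2
      have hj1 : (j : ℝ) - u ≤ 0 := by
        have := hVj j
        nlinarith
      have hj2 : 0 < (j : ℝ) + 1 - u := by
        have := hVj (j + 1)
        push_cast at this
        nlinarith
      have hx1 : ((j : ℝ) - u) ^ 2 ≤ 1 := by nlinarith
      have hy1 : ((j : ℝ) - (u - 1)) ^ 2 ≤ 1 := by nlinarith
      have hix : (2:ℝ)⁻¹ ≤ (1 + ((j : ℝ) - u) ^ 2)⁻¹ := by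
        exact inv_anti₀ hx (by linarith)
      have hiy : (2:ℝ)⁻¹ ≤ (1 + ((j : ℝ) - (u - 1)) ^ 2)⁻¹ := by
        exact inv_anti₀ hy (by linarith)
      have hAinv : (0:ℝ) < A⁻¹ := inv_pos.2 hA0
      nlinarith
  calc (∑ j ∈ Finset.range (J + 2),
          (if t < V j then A * (1 + (V j - t) ^ 2 / t)
            else if V (j + 1) ≤ t then A * (1 + (V (j + 1) - t) ^ 2 / t)
            else A)⁻¹)
      ≤ ∑ j ∈ Finset.range (J + 2),
          A⁻¹ * ((1 + ((j : ℝ) - u) ^ 2)⁻¹ + (1 + ((j : ℝ) - (u - 1)) ^ 2)⁻¹) :=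
        Finset.sum_le_sum fun j _ => hterm j
    _ = A⁻¹ * ((∑ j ∈ Finset.range (J + 2), (1 + ((j : ℝ) - u) ^ 2)⁻¹)
          + ∑ j ∈ Finset.range (J + 2), (1 + ((j : ℝ) - (u - 1)) ^ 2)⁻¹) := by
        rw [← Finset.mul_sum, Finset.sum_add_distrib]
    _ ≤ A⁻¹ * (9 + 9) := by
        have := sumB9 (J + 2) u
        have := sumB9 (J + 2) (u - 1)
        have hAinv : (0:ℝ) ≤ A⁻¹ := by positivity
        nlinarith
    _ = 18 / A := by rw [div_eq_mul_inv]; ring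
end

section
/- Let $t \geq 2$, $y \geq 4000$, and $t_0 = t/2$. Then $\sum_{y/4 < k \leq t_0} k e^{k} \exp\left(-400 k - \frac{y^2}{k} + 40 y\right) \leq C \exp\left(-2y - \frac{y^2}{t}\right)$ for an absolute constant $C > 0$, provided $y \leq t / \log t$. -/
open Real Finset

/-- There is an absolute constant `C > 0` such that for `t ≥ 2`, `y ≥ 4000` with
`y ≤ t / log t`, `∑_{y/4 < k ≤ t/2} k e^k exp(-400k - y²/k + 40y) ≤ C exp(-2y - y²/t)`. -/
theorem lower_barrier_sum_bound :
    ∃ C : ℝ, 0 < C ∧ ∀ t y : ℝ, 2 ≤ t → 4000 ≤ y → y ≤ t / Real.log t →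
      (∑ k ∈ (Finset.Icc 1 ⌊t / 2⌋₊).filter (fun k : ℕ => y / 4 < (k : ℝ)),
          (k : ℝ) * Real.exp k * Real.exp (-400 * k - y ^ 2 / k + 40 * y))
        ≤ C * Real.exp (-2 * y - y ^ 2 / t) := by
  refine ⟨2, by norm_num, ?_⟩
  intro t y ht hy hyt
  have ht0 : (0:ℝ) < t := by linarith
  have hy0 : (0:ℝ) < y := by linarith
  set S := (Finset.Icc 1 ⌊t / 2⌋₊).filter (fun k : ℕ => y / 4 < (k : ℝ)) with hS
  set E := Real.exp (-2 * y - y ^ 2 / t) with hE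
  have hE0 : 0 < E := Real.exp_pos _
  have step1 : (∑ k ∈ S, (k : ℝ) * Real.exp k * Real.exp (-400 * k - y ^ 2 / k + 40 * y))
      ≤ ∑ k ∈ S, Real.exp (-(k:ℝ)) * E := by
    apply Finset.sum_le_sum
    intro k hk
    simp only [hS, Finset.mem_filter, Finset.mem_Icc] at hk
    obtain ⟨⟨hk1, hk2⟩, hky⟩ := hk
    have hk0 : (0:ℝ) < k := by exact_mod_cast hk1
    have hkt : (k:ℝ) ≤ t / 2 :=
      le_trans (Nat.cast_le.mpr hk2) (Nat.floor_le (by positivity))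
    have hkt' : (k:ℝ) ≤ t := by linarith
    have hdiv : y ^ 2 / t ≤ y ^ 2 / k := by gcongr
    have hx : (k:ℝ) ≤ Real.exp k := le_trans (by linarith) (Real.add_one_le_exp (k:ℝ))
    calc (k:ℝ) * Real.exp k * Real.exp (-400 * k - y ^ 2 / k + 40 * y)
        ≤ Real.exp k * Real.exp k * Real.exp (-400 * k - y ^ 2 / k + 40 * y) := by
          gcongr
      _ = Real.exp ((k:ℝ) + k + (-400 * k - y ^ 2 / k + 40 * y)) := by
          rw [← Real.exp_add, ← Real.exp_add]
      _ ≤ Real.exp (-(k:ℝ) + (-2 * y - y ^ 2 / t)) := by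
          apply Real.exp_le_exp.mpr
          linarith
      _ = Real.exp (-(k:ℝ)) * E := by rw [← Real.exp_add]
  have step2 : (∑ k ∈ S, Real.exp (-(k:ℝ)) * E)
      = (∑ k ∈ S, Real.exp (-1 : ℝ) ^ k) * E := by
    rw [Finset.sum_mul]
    refine Finset.sum_congr rfl fun k _ => ?_
    congr 1
    rw [← Real.exp_nat_mul]
    ring_nf
  have hr1 : Real.exp (-1 : ℝ) ≤ 1/2 := by
    rw [Real.exp_neg]
    rw [inv_le_comm₀ (Real.exp_pos 1) (by norm_num)]
    calc (1/2 : ℝ)⁻¹ = 2 := by norm_num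
      _ ≤ Real.exp 1 := by linarith [Real.add_one_le_exp (1:ℝ)]
  have hr0 : (0:ℝ) ≤ Real.exp (-1:ℝ) := (Real.exp_pos _).le
  have hrlt : Real.exp (-1:ℝ) < 1 := by linarith
  have step3 : (∑ k ∈ S, Real.exp (-1 : ℝ) ^ k) ≤ 2 := by
    have hsum : Summable (fun k : ℕ => Real.exp (-1:ℝ) ^ k) :=
      summable_geometric_of_lt_one hr0 hrlt
    have h1 : (∑ k ∈ S, Real.exp (-1 : ℝ) ^ k) ≤ ∑' k : ℕ, Real.exp (-1:ℝ) ^ k :=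
      Summable.sum_le_tsum S (fun i _ => pow_nonneg hr0 i) hsum
    have h2 : (∑' k : ℕ, Real.exp (-1:ℝ) ^ k) = (1 - Real.exp (-1:ℝ))⁻¹ :=
      tsum_geometric_of_lt_one hr0 hrlt
    have h3 : (1 - Real.exp (-1:ℝ))⁻¹ ≤ 2 := by
      rw [inv_le_comm₀ (by linarith) (by norm_num)]
      linarith
    linarith
  calc (∑ k ∈ S, (k : ℝ) * Real.exp k * Real.exp (-400 * k - y ^ 2 / k + 40 * y))
      ≤ (∑ k ∈ S, Real.exp (-1 : ℝ) ^ k) * E := by rw [← step2]; exact step1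
    _ ≤ 2 * E := by
        apply mul_le_mul_of_nonneg_right step3 hE0.le
end

section
/- Let $N \geq 2$ and let $a : \{1, \ldots, N\} \to \mathbb{C}$. Let $\tau$ be uniformly distributed on $[T, 2T]$ with $T > 0$. Then $\mathbb{E}\left[\left|\sum_{n \leq N} a(n) n^{-i\tau}\right|^2\right] = \sum_{n \leq N} |a(n)|^2 + O\left(\frac{N}{T} \sum_{n \leq N} |a(n)|^2\right)$, where the implied constant is absolute. -/
open MeasureTheory Real Finset

/-!
Expanding the square turns the integral into `∑_{n,m} a(n) conj (a(m)) ∫ (m/n)^{iτ} dτ`,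
whose diagonal is `T ∑ |a(n)|²`. Bounding the off-diagonal integrals only by
`2 / |log (m/n)|` loses a factor `log N`, so instead the indicator of `[T, 2T]` is sandwiched
between the trapezoid weights `∫₀^N 1_{[T ∓ t, 2T ± t]} dt / N`. Their Fourier transforms at
`θ ≠ 0` are `O(1 / (N θ²))`, and `|log m - log n| ≥ |m - n| / N` makes the off-diagonal part
at most `4 N ∑_{n ≠ m} |a(n)| |a(m)| / (n - m)² ≤ 4 N (π² / 3) ∑ |a(n)|²`, while replacing
the indicator by the weights costs `N ∑ |a(n)|²`.
-/

open Complex intervalIntegral ComplexConjugate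

theorem hasSum_one_div_int_sq : HasSum (fun k : ℤ => 1 / (k : ℝ) ^ 2) (π ^ 2 / 3) := by
  have h := hasSum_zeta_two.of_nat_of_neg (f := fun k : ℤ => 1 / (k : ℝ) ^ 2)
    (by simpa using hasSum_zeta_two)
  rw [show π ^ 2 / 3 = π ^ 2 / 6 + π ^ 2 / 6 - 1 / ((0 : ℤ) : ℝ) ^ 2 by simp; ring]
  exact h

theorem tsum_one_div_int_sq_le : ∑' k : ℤ, 1 / (k : ℝ) ^ 2 ≤ 4 := by
  rw [hasSum_one_div_int_sq.tsum_eq]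
  nlinarith [pi_lt_d2, pi_pos]

theorem sum_comp_le_tsum_of_injOn {ι κ : Type*} [DecidableEq κ] {g : κ → ℝ} (hg0 : 0 ≤ g)
    (hg : Summable g) {s : Finset ι} {e : ι → κ} (he : Set.InjOn e s) :
    ∑ i ∈ s, g (e i) ≤ ∑' k, g k := by
  rw [← sum_image he]
  exact hg.sum_le_tsum _ fun k _ => hg0 k

theorem sum_sum_mul_mul_le_tsum_mul {g : ℤ → ℝ} (hg0 : 0 ≤ g) (hg : Summable g)
    (s : Finset ℕ) (x : ℕ → ℝ) :
    ∑ n ∈ s, ∑ m ∈ s, x n * x m * g (n - m) ≤ (∑' k, g k) * ∑ n ∈ s, x n ^ 2 := by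
  calc ∑ n ∈ s, ∑ m ∈ s, x n * x m * g (n - m)
      ≤ ∑ n ∈ s, ∑ m ∈ s, (x n ^ 2 / 2 + x m ^ 2 / 2) * g (n - m) := by
        gcongr with n _ m _
        · exact hg0 _
        · nlinarith [sq_nonneg (x n - x m)]
    _ = ∑ n ∈ s, x n ^ 2 / 2 * ∑ m ∈ s, g (n - m)
          + ∑ m ∈ s, x m ^ 2 / 2 * ∑ n ∈ s, g (n - m) := by
        simp only [add_mul, sum_add_distrib, mul_sum]
        exact congrArg _ sum_comm
    _ ≤ ∑ n ∈ s, x n ^ 2 / 2 * ∑' k, g k + ∑ m ∈ s, x m ^ 2 / 2 * ∑' k, g k := by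
        gcongr with n _ m _
        · exact sum_comp_le_tsum_of_injOn hg0 hg fun m _ m' _ h => by simpa using h
        · exact sum_comp_le_tsum_of_injOn hg0 hg fun n _ n' _ h => by simpa using h
    _ = (∑' k, g k) * ∑ n ∈ s, x n ^ 2 := by
        rw [← sum_add_distrib, mul_sum]
        exact sum_congr rfl fun n _ => by ring

theorem abs_sub_le_mul_abs_log_sub_log {x y M : ℝ} (hx : 0 < x) (hy : 0 < y) (hxM : x ≤ M)
    (hyM : y ≤ M) : |x - y| ≤ M * |Real.log x - Real.log y| := by
  wlog hxy : x ≤ y generalizing x y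
  · rw [abs_sub_comm, abs_sub_comm (Real.log x)]
    exact this hy hx hyM hxM (le_of_not_ge hxy)
  have hlog : (y - x) / y ≤ Real.log y - Real.log x := by
    rw [← Real.log_div hy.ne' hx.ne']
    convert one_sub_inv_le_log_of_pos (div_pos hy hx) using 1
    field_simp
  have hyx : 0 ≤ (y - x) / y := div_nonneg (by linarith) hy.le
  rw [abs_sub_comm, abs_of_nonneg (by linarith : 0 ≤ y - x), abs_sub_comm,
    abs_of_nonneg (hyx.trans hlog)]
  calc y - x = y * ((y - x) / y) := by field_simp
    _ ≤ M * (Real.log y - Real.log x) := by gcongr; linarith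

theorem one_div_sq_log_sub_log_le {N n m : ℕ} (hn : n ∈ Icc 1 N) (hm : m ∈ Icc 1 N) :
    1 / (Real.log n - Real.log m) ^ 2 ≤ N ^ 2 * (1 / ((n - m : ℤ) : ℝ) ^ 2) := by
  rw [mem_Icc] at hn hm
  rcases eq_or_ne n m with rfl | hnm
  · simp
  have hpos : 0 < ((n : ℝ) - m) ^ 2 := by
    have : (n : ℝ) - m ≠ 0 := sub_ne_zero.2 (by exact_mod_cast hnm)
    positivity
  have hspace := abs_sub_le_mul_abs_log_sub_log (x := n) (y := m) (M := N)
    (by exact_mod_cast hn.1) (by exact_mod_cast hm.1) (by exact_mod_cast hn.2)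
    (by exact_mod_cast hm.2)
  have hsq : ((n : ℝ) - m) ^ 2 ≤ N ^ 2 * (Real.log n - Real.log m) ^ 2 := by
    simpa only [mul_pow, sq_abs] using pow_le_pow_left₀ (abs_nonneg _) hspace 2
  push_cast
  rw [mul_one_div, div_le_div_iff₀ (by nlinarith) hpos]
  linarith

theorem sum_sum_mul_div_sq_log_sub_log_le (N : ℕ) (x : ℕ → ℝ) (hx : 0 ≤ x) :
    ∑ n ∈ Icc 1 N, ∑ m ∈ Icc 1 N, x n * x m * (1 / (Real.log n - Real.log m) ^ 2)
      ≤ 4 * N ^ 2 * ∑ n ∈ Icc 1 N, x n ^ 2 := by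
  calc _ ≤ ∑ n ∈ Icc 1 N, ∑ m ∈ Icc 1 N,
          x n * x m * ((N : ℝ) ^ 2 * (1 / ((n - m : ℤ) : ℝ) ^ 2)) := by
        gcongr with n hn m hm
        · exact mul_nonneg (hx n) (hx m)
        · exact one_div_sq_log_sub_log_le hn hm
    _ = (N : ℝ) ^ 2 * ∑ n ∈ Icc 1 N, ∑ m ∈ Icc 1 N, x n * x m * (1 / ((n - m : ℤ) : ℝ) ^ 2) := by
        simp only [mul_sum]
        exact sum_congr rfl fun n _ => sum_congr rfl fun m _ => by ring
    _ ≤ N ^ 2 * ((∑' k : ℤ, 1 / (k : ℝ) ^ 2) * ∑ n ∈ Icc 1 N, x n ^ 2) := by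
        gcongr
        exact sum_sum_mul_mul_le_tsum_mul (fun k => by positivity)
          hasSum_one_div_int_sq.summable _ _
    _ ≤ N ^ 2 * (4 * ∑ n ∈ Icc 1 N, x n ^ 2) := by gcongr; exact tsum_one_div_int_sq_le
    _ = 4 * N ^ 2 * ∑ n ∈ Icc 1 N, x n ^ 2 := by ring

theorem continuous_integral_of_continuous_bounds {E : Type*} [NormedAddCommGroup E]
    [NormedSpace ℝ E] {f : ℝ → E} (hf : Continuous f) {p q : ℝ → ℝ} (hp : Continuous p)
    (hq : Continuous q) : Continuous fun s => ∫ τ in p s..q s, f τ := by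
  have hprim := continuous_primitive (μ := volume) (fun a b => hf.intervalIntegrable a b) 0
  have h : (fun s => ∫ τ in p s..q s, f τ) =
      fun s => (∫ τ in 0..q s, f τ) - ∫ τ in 0..p s, f τ := by
    funext s
    rw [integral_interval_sub_left (hf.intervalIntegrable _ _) (hf.intervalIntegrable _ _)]
  rw [h]
  exact (hprim.comp hq).sub (hprim.comp hp)

theorem integral_mono_interval_of_nonneg {f : ℝ → ℝ} (hf0 : 0 ≤ f) {a b c d : ℝ} (hca : c ≤ a)
    (hcd : c ≤ d) (hbd : b ≤ d) (hfi : IntervalIntegrable f volume c d) :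
    ∫ x in a..b, f x ≤ ∫ x in c..d, f x := by
  rcases le_total a b with hab | hba
  · exact integral_mono_interval hca hab hbd (ae_of_all _ hf0) hfi
  · rw [integral_symm]
    have hba' := integral_nonneg (μ := volume) hba fun x _ => hf0 x
    have hcd' := integral_nonneg (μ := volume) hcd fun x _ => hf0 x
    linarith

theorem integral_sum_sum_mul {ι : Type*} (s : Finset ι) (c : ι → ι → ℂ) (f : ι → ι → ℝ → ℂ)
    {p q : ℝ} (hf : ∀ i j, IntervalIntegrable (f i j) volume p q) :
    ∫ x in p..q, ∑ i ∈ s, ∑ j ∈ s, c i j * f i j x =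
      ∑ i ∈ s, ∑ j ∈ s, c i j * ∫ x in p..q, f i j x := by
  have hrow : ∀ i, IntervalIntegrable (fun x => ∑ j ∈ s, c i j * f i j x) volume p q := fun i => by
    simpa only [sum_fn] using IntervalIntegrable.sum s fun j _ => (hf i j).const_mul (c i j)
  rw [integral_finsetSum fun i _ => hrow i]
  refine sum_congr rfl fun i _ => ?_
  rw [integral_finsetSum fun j _ => (hf i j).const_mul _]
  exact sum_congr rfl fun j _ => integral_const_mul _ _

theorem norm_integral_exp_mul_I_le {θ : ℝ} (hθ : θ ≠ 0) (p q : ℝ) :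
    ‖∫ τ in p..q, cexp (θ * I * τ)‖ ≤ 2 / |θ| := by
  have hexp : ∀ x : ℝ, ‖cexp (θ * I * x)‖ = 1 := fun x => by
    rw [mul_right_comm, ← ofReal_mul]
    exact norm_exp_ofReal_mul_I _
  rw [integral_exp_mul_complex (by simpa using hθ), norm_div, norm_mul, norm_I, mul_one,
    norm_real, Real.norm_eq_abs]
  gcongr
  calc _ ≤ ‖cexp (θ * I * q)‖ + ‖cexp (θ * I * p)‖ := norm_sub_le _ _
    _ = 2 := by rw [hexp, hexp]; norm_num

theorem sq_norm_sum_mul_exp {ι : Type*} (s : Finset ι) (a : ι → ℂ) (ω : ι → ℝ) (τ : ℝ) :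
    ((‖∑ i ∈ s, a i * cexp (ω i * I * τ)‖ ^ 2 : ℝ) : ℂ) =
      ∑ i ∈ s, ∑ j ∈ s, a i * conj (a j) * cexp ((ω i - ω j : ℝ) * I * τ) := by
  push_cast
  rw [← mul_conj', map_sum, sum_mul_sum]
  refine sum_congr rfl fun i _ => sum_congr rfl fun j _ => ?_
  rw [map_mul, ← exp_conj, mul_mul_mul_comm, ← Complex.exp_add]
  simp only [map_mul, conj_ofReal, conj_I]
  ring_nf

/-- The Fourier transform at `θ` of the trapezoid weight `τ ↦ ∫₀^Δ 1_{[u - σt, v + σt]}(τ) dt`. -/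
noncomputable def trapezoidKernel (u v σ Δ θ : ℝ) : ℂ :=
  ∫ t in (0 : ℝ)..Δ, ∫ τ in (u - σ * t)..(v + σ * t), cexp (θ * I * τ)

theorem trapezoidKernel_zero (u v σ Δ : ℝ) :
    trapezoidKernel u v σ Δ 0 = (v - u) * Δ + σ * Δ ^ 2 := by
  have hinner : ∀ t : ℝ, ∫ τ in (u - σ * t)..(v + σ * t), cexp ((0 : ℝ) * I * τ) =
      ((v - u + 2 * σ * t : ℝ) : ℂ) := by
    intro t
    simp only [ofReal_zero, zero_mul, Complex.exp_zero, intervalIntegral.integral_const,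
      real_smul, mul_one]
    push_cast
    ring
  rw [trapezoidKernel, funext hinner, intervalIntegral.integral_ofReal,
    intervalIntegral.integral_add intervalIntegrable_const
      ((by fun_prop : Continuous fun t : ℝ => 2 * σ * t).intervalIntegrable _ _),
    intervalIntegral.integral_const, intervalIntegral.integral_const_mul, integral_id]
  simp only [smul_eq_mul]
  push_cast
  ring

theorem norm_trapezoidKernel_le {θ σ : ℝ} (hθ : θ ≠ 0) (hσ : σ ≠ 0) (u v Δ : ℝ) :
    ‖trapezoidKernel u v σ Δ θ‖ ≤ 4 / (|σ| * θ ^ 2) := by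
  have hθI : (θ : ℂ) * I ≠ 0 := by simpa using hθ
  have hshift : ∀ x c : ℝ, c ≠ 0 →
      ‖∫ t in (0 : ℝ)..Δ, cexp (θ * I * ↑(x + c * t))‖ ≤ 2 / (|c| * |θ|) := by
    intro x c hc
    rw [integral_comp_add_mul (fun τ : ℝ => cexp (θ * I * τ)) hc, norm_smul, norm_inv,
      Real.norm_eq_abs]
    calc |c|⁻¹ * _ ≤ |c|⁻¹ * (2 / |θ|) := by gcongr; exact norm_integral_exp_mul_I_le hθ _ _
      _ = 2 / (|c| * |θ|) := by field_simp
  have hinner : ∀ t : ℝ, ∫ τ in (u - σ * t)..(v + σ * t), cexp (θ * I * τ) =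
      (cexp (θ * I * ↑(v + σ * t)) - cexp (θ * I * ↑(u + -σ * t))) / (θ * I) := by
    intro t
    rw [integral_exp_mul_complex hθI, neg_mul, ← sub_eq_add_neg]
  rw [trapezoidKernel, funext hinner, intervalIntegral.integral_div,
    intervalIntegral.integral_sub (Continuous.intervalIntegrable (by fun_prop) _ _)
      (Continuous.intervalIntegrable (by fun_prop) _ _), norm_div, norm_mul, norm_I, mul_one,
    norm_real, Real.norm_eq_abs]
  calc _ ≤ (2 / (|σ| * |θ|) + 2 / (|-σ| * |θ|)) / |θ| := by
        gcongr
        exact (norm_sub_le _ _).trans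
          (add_le_add (hshift _ _ hσ) (hshift _ _ (neg_ne_zero.2 hσ)))
    _ = 4 / (|σ| * θ ^ 2) := by
        rw [abs_neg, ← sq_abs θ]
        field_simp
        ring

theorem integral_integral_sq_norm_sum_mul_exp {ι : Type*} (s : Finset ι) (a : ι → ℂ)
    (ω : ι → ℝ) (u v σ Δ : ℝ) :
    ((∫ t in (0 : ℝ)..Δ, ∫ τ in (u - σ * t)..(v + σ * t),
        ‖∑ i ∈ s, a i * cexp (ω i * I * τ)‖ ^ 2 : ℝ) : ℂ) =
      ∑ i ∈ s, ∑ j ∈ s, a i * conj (a j) * trapezoidKernel u v σ Δ (ω i - ω j) := by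
  have hcont : ∀ θ : ℝ, Continuous fun t : ℝ =>
      ∫ τ in (u - σ * t)..(v + σ * t), cexp (θ * I * τ) := fun θ =>
    continuous_integral_of_continuous_bounds (by fun_prop) (by fun_prop) (by fun_prop)
  rw [← intervalIntegral.integral_ofReal]
  simp_rw [← intervalIntegral.integral_ofReal, sq_norm_sum_mul_exp]
  simp_rw [integral_sum_sum_mul s _ (fun i j => fun τ : ℝ => cexp ((ω i - ω j : ℝ) * I * τ))
    fun i j => (by fun_prop : Continuous _).intervalIntegrable _ _]
  exact integral_sum_sum_mul s _ _ fun i j => (hcont _).intervalIntegrable _ _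

/-- The diagonal terms of the right-hand side vanish: `4 / (|σ| * 0) = 0`. -/
theorem norm_sum_sum_trapezoidKernel_sub_le {ι : Type*} [DecidableEq ι] (s : Finset ι)
    (a : ι → ℂ) {ω : ι → ℝ} (hω : Set.InjOn ω s) {σ : ℝ} (hσ : σ ≠ 0) (u v Δ : ℝ) :
    ‖∑ i ∈ s, ∑ j ∈ s, a i * conj (a j) * trapezoidKernel u v σ Δ (ω i - ω j)
        - trapezoidKernel u v σ Δ 0 * ∑ i ∈ s, (‖a i‖ : ℂ) ^ 2‖
      ≤ ∑ i ∈ s, ∑ j ∈ s, ‖a i‖ * ‖a j‖ * (4 / (|σ| * (ω i - ω j) ^ 2)) := by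
  set K := trapezoidKernel u v σ Δ
  have hdiag : K 0 * ∑ i ∈ s, (‖a i‖ : ℂ) ^ 2 =
      ∑ i ∈ s, ∑ j ∈ s, a i * conj (a j) * if i = j then K 0 else 0 := by
    simp only [mul_ite, mul_zero, sum_ite_eq]
    rw [mul_sum]
    refine sum_congr rfl fun i hi => ?_
    rw [if_pos hi, mul_conj', mul_comm]
  have hpair : ∀ i ∈ s, ∀ j ∈ s,
      ‖K (ω i - ω j) - if i = j then K 0 else 0‖ ≤ 4 / (|σ| * (ω i - ω j) ^ 2) := by
    intro i hi j hj
    by_cases hij : i = j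
    · simp [hij]
    · rw [if_neg hij, sub_zero]
      exact norm_trapezoidKernel_le (sub_ne_zero.2 fun h => hij (hω hi hj h)) hσ u v Δ
  rw [hdiag, ← sum_sub_distrib]
  refine (norm_sum_le _ _).trans (sum_le_sum fun i hi => ?_)
  rw [← sum_sub_distrib]
  refine (norm_sum_le _ _).trans (sum_le_sum fun j hj => ?_)
  rw [← mul_sub, norm_mul, norm_mul, norm_conj]
  gcongr
  exact hpair i hi j hj

theorem abs_integral_sub_le_of_trapezoid {F : ℝ → ℝ} (hF0 : 0 ≤ F) (hF : Continuous F)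
    {u v Δ M E : ℝ} (huv : u ≤ v) (hΔ : 0 < Δ)
    (hE : ∀ σ : ℝ, |σ| = 1 → |(∫ t in (0 : ℝ)..Δ, ∫ τ in (u - σ * t)..(v + σ * t), F τ)
      - ((v - u) * Δ + σ * Δ ^ 2) * M| ≤ E) :
    |(∫ τ in u..v, F τ) - (v - u) * M| ≤ Δ * M + E / Δ := by
  set I := ∫ τ in u..v, F τ
  have hJ : ∀ σ : ℝ, IntervalIntegrable
      (fun t => ∫ τ in (u - σ * t)..(v + σ * t), F τ) volume 0 Δ := fun σ =>
    (continuous_integral_of_continuous_bounds hF (by fun_prop) (by fun_prop)).intervalIntegrable _ _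
  have hupper : Δ * I ≤ ∫ t in (0 : ℝ)..Δ, ∫ τ in (u - 1 * t)..(v + 1 * t), F τ := by
    simpa using integral_mono_on hΔ.le intervalIntegrable_const (hJ 1) fun t ht =>
      integral_mono_interval_of_nonneg hF0 (by linarith [ht.1]) (by linarith [ht.1])
        (by linarith [ht.1]) (hF.intervalIntegrable _ _)
  -- for `2 * t > v - u` the inner interval is reversed and its integral is nonpositive
  have hlower : ∫ t in (0 : ℝ)..Δ, ∫ τ in (u - -1 * t)..(v + -1 * t), F τ ≤ Δ * I := by
    simpa using integral_mono_on hΔ.le (hJ (-1)) intervalIntegrable_const fun t ht =>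
      integral_mono_interval_of_nonneg hF0 (by linarith [ht.1]) huv
        (by linarith [ht.1]) (hF.intervalIntegrable _ _)
  have h₁ := abs_le.1 (hE 1 (by norm_num))
  have h₂ := abs_le.1 (hE (-1) (by norm_num))
  refine le_of_mul_le_mul_left ?_ hΔ
  rw [← abs_of_pos hΔ, ← abs_mul, abs_of_pos hΔ, mul_add, mul_div_cancel₀ _ hΔ.ne', abs_le]
  constructor <;> nlinarith

theorem abs_integral_integral_dirichlet_sub_le (N : ℕ) (a : ℕ → ℂ) {σ : ℝ} (hσ : σ ≠ 0)
    (u v Δ : ℝ) :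
    |(∫ t in (0 : ℝ)..Δ, ∫ τ in (u - σ * t)..(v + σ * t),
        ‖∑ n ∈ Icc 1 N, a n * cexp (-(τ * Real.log n) * I)‖ ^ 2)
      - ((v - u) * Δ + σ * Δ ^ 2) * ∑ n ∈ Icc 1 N, ‖a n‖ ^ 2|
      ≤ 16 * N ^ 2 / |σ| * ∑ n ∈ Icc 1 N, ‖a n‖ ^ 2 := by
  set ω : ℕ → ℝ := fun n => -Real.log n
  have hω : Set.InjOn ω (Icc 1 N) := fun n hn m hm h => by
    simp only [coe_Icc, Set.mem_Icc] at hn hm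
    exact_mod_cast log_injOn_pos (Set.mem_Ioi.2 (by exact_mod_cast hn.1))
      (Set.mem_Ioi.2 (by exact_mod_cast hm.1)) (neg_inj.1 h : _)
  have hpoly : ∀ τ : ℝ, ∑ n ∈ Icc 1 N, a n * cexp (-(τ * Real.log n) * I) =
      ∑ n ∈ Icc 1 N, a n * cexp (ω n * I * τ) := fun τ =>
    sum_congr rfl fun n _ => by simp only [ω]; push_cast; ring_nf
  simp_rw [hpoly]
  rw [← Real.norm_eq_abs, ← Complex.norm_real]
  push_cast
  rw [integral_integral_sq_norm_sum_mul_exp, ← trapezoidKernel_zero]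
  calc _ ≤ ∑ n ∈ Icc 1 N, ∑ m ∈ Icc 1 N, ‖a n‖ * ‖a m‖ * (4 / (|σ| * (ω n - ω m) ^ 2)) :=
        norm_sum_sum_trapezoidKernel_sub_le _ _ hω hσ u v Δ
    _ = 4 / |σ| * ∑ n ∈ Icc 1 N, ∑ m ∈ Icc 1 N,
          ‖a n‖ * ‖a m‖ * (1 / (Real.log n - Real.log m) ^ 2) := by
        simp only [mul_sum, ω]
        refine sum_congr rfl fun n _ => sum_congr rfl fun m _ => ?_
        rw [show (-Real.log n - -Real.log m) ^ 2 = (Real.log n - Real.log m) ^ 2 by ring,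
          ← div_div, div_eq_mul_one_div (4 / |σ|)]
        ring
    _ ≤ 4 / |σ| * (4 * N ^ 2 * ∑ n ∈ Icc 1 N, ‖a n‖ ^ 2) := by
        gcongr
        exact sum_sum_mul_div_sq_log_sub_log_le N (fun n => ‖a n‖) fun n => norm_nonneg _
    _ = 16 * N ^ 2 / |σ| * ∑ n ∈ Icc 1 N, ‖a n‖ ^ 2 := by ring

/-- Mean value theorem for Dirichlet polynomials: there is an absolute constant `C > 0` such
that for `N ≥ 2`, `T > 0` and coefficients `a : ℕ → ℂ`, the average of
`|∑_{n ≤ N} a(n) n^{-iτ}|²` over `τ ∈ [T, 2T]` equals `∑_{n ≤ N} |a(n)|²` up to an error at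
most `C (N/T) ∑_{n ≤ N} |a(n)|²`. -/
theorem dirichlet_mean_value_theorem :
    ∃ C : ℝ, 0 < C ∧
      ∀ (N : ℕ) (T : ℝ) (a : ℕ → ℂ), 2 ≤ N → 0 < T →
      |(T⁻¹ * ∫ τ in Set.Icc T (2 * T),
          (‖∑ n ∈ Finset.Icc 1 N,
              a n * Complex.exp (-(τ * Real.log n) * Complex.I)‖) ^ 2)
        - ∑ n ∈ Finset.Icc 1 N, (‖a n‖) ^ 2|
        ≤ C * ((N : ℝ) / T) * ∑ n ∈ Finset.Icc 1 N, (‖a n‖) ^ 2 := by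
  refine ⟨17, by norm_num, fun N T a hN hT => ?_⟩
  set S := ∑ n ∈ Icc 1 N, ‖a n‖ ^ 2
  set F : ℝ → ℝ := fun τ => ‖∑ n ∈ Icc 1 N, a n * cexp (-(τ * Real.log n) * I)‖ ^ 2
  have hN : (0 : ℝ) < N := by exact_mod_cast (by omega : 0 < N)
  have hsandwich : |(∫ τ in T..2 * T, F τ) - (2 * T - T) * S| ≤ N * S + 16 * N ^ 2 * S / N :=
    abs_integral_sub_le_of_trapezoid (fun τ => by positivity) (by fun_prop) (by linarith) hN
      fun σ hσ => by
        simpa only [hσ, div_one] using abs_integral_integral_dirichlet_sub_le N a (σ := σ)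
          (by rintro rfl; simp at hσ) T (2 * T) N
  rw [integral_Icc_eq_integral_Ioc, ← intervalIntegral.integral_of_le (by linarith)]
  calc |T⁻¹ * (∫ τ in T..2 * T, F τ) - S|
      = T⁻¹ * |(∫ τ in T..2 * T, F τ) - (2 * T - T) * S| := by
        rw [← abs_of_pos (inv_pos.2 hT), ← abs_mul, abs_of_pos (inv_pos.2 hT)]
        congr 1
        field_simp
        ring
    _ ≤ T⁻¹ * (N * S + 16 * N ^ 2 * S / N) := by gcongr
    _ = 17 * (N / T) * S := by
        field_simp
        ring
end
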